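/- arXiv:math/0306337 — 6 statements merged into one kernel-verified Lean document; each statement's English description precedes it below -/
import Mathlib

section
/- For any integer p ≥ 0 and integer q, the alternating sum ∑_k (-1)^k 2^{-k} C(p,k) C(2k, k-q) equals (-1)^q 2^{-p} C(p, (p+q)/2) if p+q is even, and 0 if p+q is odd. -/
/-!
Both sides, as functions of `(p, q)`, satisfy `f (p + 1) q = -(f p (q - 1) + f p (q + 1))` and
equal `[q = 0]` at `p = 0`. For the closed form this is Pascal's rule. For the sum `S`, Pascal's rule on
`C(p + 1, k)` gives `S (p + 1) = 2 S p - S' p`, where `S'` uses the shifted coefficients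
`C(2k + 2, k + 1 - q) = C(2k, k - q + 1) + 2 C(2k, k - q) + C(2k, k - q - 1)`, so that
`S' p q = S p (q - 1) + 2 S p q + S p (q + 1)`. Equivalently: `∑_q C(2k, k - q) x^q = (x + 2 + x⁻¹)^k`,
so the sum is the coefficient of `x^q` in `(2 - (x + 2 + x⁻¹))^p = (-(x + x⁻¹))^p`.
-/

open Finset

def intChoose (n : ℕ) (k : ℤ) : ℤ := if 0 ≤ k then (n.choose k.toNat : ℤ) else 0

lemma intChoose_zero_left (k : ℤ) : intChoose 0 k = if k = 0 then 1 else 0 := by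
  rcases k with (_ | m) | m
  · simp [intChoose]
  · simp [intChoose]
    omega
  · simp [intChoose]

lemma intChoose_succ (n : ℕ) (k : ℤ) :
    intChoose (n + 1) k = intChoose n (k - 1) + intChoose n k := by
  rcases k with (_ | m) | m
  · simp [intChoose]
  · have hm : (0 : ℤ) ≤ m + 1 := by omega
    simp [intChoose, Nat.choose_succ_succ', hm]
  · simp [intChoose]

lemma intChoose_add_two (n : ℕ) (k : ℤ) :
    intChoose (n + 2) k = intChoose n (k - 2) + 2 * intChoose n (k - 1) + intChoose n k := by
  rw [intChoose_succ, intChoose_succ, intChoose_succ, sub_sub, one_add_one_eq_two]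
  ring

section BinomialTransform

variable {R : Type*} [CommRing R]

def binomialTransform (a b : R) (c : ℕ → R) (p : ℕ) : R :=
  ∑ k ∈ range (p + 1), b ^ k * a ^ (p - k) * p.choose k * c k

lemma pow_sub_mul_choose_succ (a : R) (p k : ℕ) :
    a ^ (p - k) * p.choose (k + 1) = a * a ^ (p - (k + 1)) * p.choose (k + 1) := by
  rcases Nat.lt_or_ge k p with hk | hk
  · rw [← pow_succ', Nat.sub_add_eq, Nat.sub_add_cancel (Nat.sub_pos_of_lt hk)]
  · simp [Nat.choose_eq_zero_of_lt (Nat.lt_succ_of_le hk)]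

lemma binomialTransform_succ (a b : R) (c : ℕ → R) (p : ℕ) :
    binomialTransform a b c (p + 1)
      = a * binomialTransform a b c p + b * binomialTransform a b (fun k => c (k + 1)) p := by
  set g : ℕ → R := fun k => b ^ k * a ^ (p - k) * p.choose k * c k
  have hg : g (p + 1) = 0 := by simp [g]
  calc binomialTransform a b c (p + 1)
      = ∑ k ∈ range (p + 1), (a * g (k + 1) + b * (b ^ k * a ^ (p - k) * p.choose k * c (k + 1)))
          + a * g 0 := by
        rw [binomialTransform, sum_range_succ']
        congr 1
        · refine sum_congr rfl fun k _ => ?_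
          simp only [g, Nat.choose_succ_succ, Nat.succ_sub_succ, Nat.cast_add]
          linear_combination b ^ (k + 1) * c (k + 1) * pow_sub_mul_choose_succ a p k
        · simp [g, pow_succ', mul_assoc]
    _ = a * binomialTransform a b c p + b * binomialTransform a b (fun k => c (k + 1)) p := by
        rw [sum_add_distrib, ← mul_sum, ← mul_sum, add_right_comm, ← mul_add, ← sum_range_succ',
          sum_range_succ, hg, add_zero]
        rfl

lemma binomialTransform_add (a b : R) (c d : ℕ → R) (p : ℕ) :
    binomialTransform a b (fun k => c k + d k) p
      = binomialTransform a b c p + binomialTransform a b d p := by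
  simp only [binomialTransform, mul_add, sum_add_distrib]

lemma binomialTransform_const_mul (a b r : R) (c : ℕ → R) (p : ℕ) :
    binomialTransform a b (fun k => r * c k) p = r * binomialTransform a b c p := by
  simp only [binomialTransform, mul_sum]
  exact sum_congr rfl fun _ _ => by ring

end BinomialTransform

def dawsonSum (p : ℕ) (q : ℤ) : ℤ :=
  binomialTransform 2 (-1) (fun k => intChoose (2 * k) (k - q)) p

lemma dawsonSum_zero (q : ℤ) : dawsonSum 0 q = if q = 0 then 1 else 0 := by
  simp [dawsonSum, binomialTransform, intChoose_zero_left]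

lemma dawsonSum_succ (p : ℕ) (q : ℤ) :
    dawsonSum (p + 1) q = -(dawsonSum p (q - 1) + dawsonSum p (q + 1)) := by
  have hcoeff_succ : (fun k : ℕ => intChoose (2 * (k + 1)) ((k + 1 : ℕ) - q))
      = fun k : ℕ => intChoose (2 * k) (k - (q + 1)) + 2 * intChoose (2 * k) (k - q)
          + intChoose (2 * k) (k - (q - 1)) := by
    funext k
    rw [mul_add, mul_one, intChoose_add_two,
      show ((k + 1 : ℕ) : ℤ) - q - 2 = k - (q + 1) by omega,
      show ((k + 1 : ℕ) : ℤ) - q - 1 = k - q by omega,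
      show ((k + 1 : ℕ) : ℤ) - q = k - (q - 1) by omega]
  rw [dawsonSum, binomialTransform_succ, hcoeff_succ, binomialTransform_add, binomialTransform_add,
    binomialTransform_const_mul]
  simp only [dawsonSum]
  ring

def dawsonClosedForm (p : ℕ) (q : ℤ) : ℤ :=
  if Even ((p : ℤ) + q) then q.negOnePow * intChoose p ((p + q) / 2) else 0

lemma dawsonClosedForm_zero (q : ℤ) : dawsonClosedForm 0 q = if q = 0 then 1 else 0 := by
  by_cases hq : q = 0
  · simp [dawsonClosedForm, intChoose_zero_left, hq]
  · have : ¬(Even q ∧ q / 2 = 0) := fun ⟨⟨r, hr⟩, h⟩ => hq (by omega)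
    simp_all [dawsonClosedForm, intChoose_zero_left]

lemma dawsonClosedForm_succ (p : ℕ) (q : ℤ) :
    dawsonClosedForm (p + 1) q = -(dawsonClosedForm p (q - 1) + dawsonClosedForm p (q + 1)) := by
  unfold dawsonClosedForm
  push_cast
  by_cases h : Even ((p : ℤ) + 1 + q)
  · obtain ⟨r, hr⟩ := h
    rw [if_pos ⟨r, hr⟩, if_pos ⟨r - 1, by omega⟩, if_pos ⟨r, by omega⟩,
      show ((p : ℤ) + 1 + q) / 2 = r by omega, show ((p : ℤ) + (q - 1)) / 2 = r - 1 by omega,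
      show ((p : ℤ) + (q + 1)) / 2 = r by omega, intChoose_succ, Int.negOnePow_sub,
      Int.negOnePow_succ, Int.negOnePow_one]
    push_cast
    ring
  · have h₁ : ¬Even ((p : ℤ) + (q - 1)) := fun ⟨r, hr⟩ => h ⟨r + 1, by omega⟩
    have h₂ : ¬Even ((p : ℤ) + (q + 1)) := fun ⟨r, hr⟩ => h ⟨r, by omega⟩
    rw [if_neg h, if_neg h₁, if_neg h₂]
    ring

theorem dawsonSum_eq_closedForm (p : ℕ) (q : ℤ) : dawsonSum p q = dawsonClosedForm p q := by
  induction p generalizing q with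
  | zero => rw [dawsonSum_zero, dawsonClosedForm_zero]
  | succ p ih => rw [dawsonSum_succ, dawsonClosedForm_succ, ih, ih]

/-- Identity (attributed to Dawson): for `p ≥ 0` and any integer `q`,
`∑_k (-1)^k 2^{p-k} C(p,k) C(2k,k-q)` equals `(-1)^q C(p,(p+q)/2)` when
`p+q` is even and `0` when `p+q` is odd (binomials with out-of-range
arguments being zero). -/
theorem dawson_identity (p : ℕ) (q : ℤ) :
    (∑ k ∈ Finset.range (p + 1),
      (-1 : ℤ) ^ k * 2 ^ (p - k) * (p.choose k) *
        (if 0 ≤ (k : ℤ) - q then (((2 * k).choose ((k : ℤ) - q).toNat : ℕ) : ℤ) else 0))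
    = if Even ((p : ℤ) + q) then
        (-1 : ℤ) ^ q.natAbs *
          (if 0 ≤ (p : ℤ) + q then ((p.choose ((((p : ℤ) + q) / 2).toNat) : ℕ) : ℤ) else 0)
      else 0 := by
  have h := dawsonSum_eq_closedForm p q
  unfold dawsonSum binomialTransform dawsonClosedForm intChoose at h
  have hsign : (q.negOnePow : ℤ) = (-1) ^ q.natAbs :=
    Int.cast_id.symm.trans (Int.coe_negOnePow ℤ q)
  rw [h]
  simp only [hsign, Int.ediv_nonneg_iff_of_pos two_pos]
end

section
/- Let u ≤ v be nonnegative integers with v-u even. Define a sequence e_m recursively by e_u = 1 and e_m = C(2m, m-u) - (2m/(v+2-m)) e_{m-1} for m = u+1, ..., v+1. Then e_{v+1} = 0. -/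
open Polynomial Finset

private lemma keyA (u n : ℕ) (hu : u ≤ n) (hodd : Odd (n - u)) :
    ∑ j ∈ Finset.Icc u n, (-2:ℚ)^(n-j) * (n.choose j : ℚ) * (((2*j).choose (j-u)) : ℚ) = 0 := by
  have hL : ((1 + X^2 : ℚ[X])^n).coeff (n-u) = 0 := by
    have h1 : (1 + X^2 : ℚ[X]) = X^2 + 1 := by ring
    rw [h1, add_pow, finset_sum_coeff]
    apply Finset.sum_eq_zero
    intro k hk
    simp only [one_pow, mul_one, ← pow_mul, ← Polynomial.C_eq_natCast,
      coeff_mul_C, coeff_X_pow]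
    rw [if_neg, zero_mul]
    intro h
    rw [h] at hodd
    exact (Nat.not_odd_iff_even.mpr ⟨k, by ring⟩) hodd
  have hR : ((1 + X^2 : ℚ[X])^n).coeff (n-u)
      = ∑ j ∈ Finset.range (n+1), ((1+X:ℚ[X])^(2*j) * ((-2 : ℚ[X]) * X)^(n-j) * (n.choose j : ℚ[X])).coeff (n-u) := by
    have h2 : (1 + X^2 : ℚ[X]) = (1+X)^2 + (-2) * X := by ring
    rw [h2, add_pow, finset_sum_coeff]
    congr 1
    ext j
    rw [← pow_mul]
  rw [hR] at hL
  rw [← hL]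
  have hterm : ∀ j ∈ Finset.range (n+1),
      ((1+X:ℚ[X])^(2*j) * ((-2 : ℚ[X]) * X)^(n-j) * (n.choose j : ℚ[X])).coeff (n-u)
      = if u ≤ j then (-2:ℚ)^(n-j) * (n.choose j : ℚ) * (((2*j).choose (j-u)) : ℚ) else 0 := by
    intro j hj
    have hjn : j ≤ n := Nat.lt_succ_iff.mp (Finset.mem_range.mp hj)
    have hx : ((-2 : ℚ[X]) * X)^(n-j) = Polynomial.C ((-2:ℚ)^(n-j)) * X^(n-j) := by
      have hc : (-2 : ℚ[X]) = Polynomial.C (-2:ℚ) := by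
        rw [map_neg, show (2:ℚ) = ((2:ℕ):ℚ) by norm_num, Polynomial.C_eq_natCast]; norm_num
      rw [mul_pow, hc, ← map_pow]
    rw [hx, ← Polynomial.C_eq_natCast]
    rw [show (1+X:ℚ[X])^(2*j) * (Polynomial.C ((-2:ℚ)^(n-j)) * X^(n-j)) * Polynomial.C (n.choose j : ℚ)
        = Polynomial.C ((-2:ℚ)^(n-j) * (n.choose j : ℚ)) * ((1+X:ℚ[X])^(2*j) * X^(n-j)) by
      rw [Polynomial.C_mul]; ring]
    rw [coeff_C_mul, coeff_mul_X_pow']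
    by_cases hcase : u ≤ j
    · have h1 : n - j ≤ n - u := Nat.sub_le_sub_left hcase n
      rw [if_pos h1, if_pos hcase, coeff_one_add_X_pow]
      have h2 : n - u - (n - j) = j - u := by omega
      rw [h2]
    · have h1 : ¬ (n - j ≤ n - u) := by omega
      rw [if_neg h1, if_neg hcase, mul_zero]
  rw [Finset.sum_congr rfl hterm]
  rw [Finset.sum_ite, Finset.sum_const_zero, add_zero]
  congr 1
  ext j
  simp [Finset.mem_filter, Finset.mem_Icc, Nat.lt_succ_iff]
  tauto


/-- Let `u ≤ v` with `v - u` even, and let `e : ℕ → ℚ` satisfy `e u = 1` and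
`e m = C(2m, m-u) - (2m/(v+2-m)) e_{m-1}` for `m = u+1, …, v+1`.
Then `e_{v+1} = 0`. -/
theorem recursion_vanishes (u v : ℕ) (huv : u ≤ v) (hpar : Even (v - u))
    (e : ℕ → ℚ) (hbase : e u = 1)
    (hrec : ∀ m : ℕ, u + 1 ≤ m → m ≤ v + 1 →
      e m = ((2 * m).choose (m - u) : ℚ) -
        ((2 * m : ℚ) / ((v : ℚ) + 2 - (m : ℚ))) * e (m - 1)) :
    e (v + 1) = 0 := by
  set E : ℕ → ℚ := fun m => ∑ j ∈ Finset.Icc u m,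
    (-2:ℚ)^(m-j) * ((Nat.factorial m : ℚ) * (Nat.factorial (v+1-m) : ℚ)) / ((Nat.factorial j : ℚ) * (Nat.factorial (v+1-j) : ℚ))
      * (((2*j).choose (j-u)) : ℚ) with hE
  have hfact : ∀ k : ℕ, ((Nat.factorial k : ℚ)) ≠ 0 := fun k => Nat.cast_ne_zero.mpr (Nat.factorial_ne_zero k)
  have hmain : ∀ m : ℕ, u ≤ m → m ≤ v + 1 → e m = E m := by
    intro m hm
    induction m, hm using Nat.le_induction with
    | base =>
      intro _
      rw [hbase, hE]
      simp only [Finset.Icc_self, Finset.sum_singleton, Nat.sub_self, pow_zero,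
        Nat.choose_zero_right, Nat.cast_one, mul_one, one_mul]
      rw [div_self (by positivity)]
    | succ k hk ih =>
      intro hk1
      have hkv : k ≤ v := by omega
      have hek : e k = E k := ih (by omega)
      rw [hrec (k+1) (by omega) hk1]
      simp only [Nat.add_sub_cancel]
      rw [hek, hE]
      beta_reduce
      have hsplit : Finset.Icc u (k+1) = insert (k+1) (Finset.Icc u k) := by
        ext x; simp only [Finset.mem_Icc, Finset.mem_insert]; omega
      rw [hsplit, Finset.sum_insert (by simp)]
      have hterm : (-2:ℚ)^((k+1)-(k+1)) * ((Nat.factorial (k+1) : ℚ) * (Nat.factorial (v+1-(k+1)) : ℚ)) / ((Nat.factorial (k+1) : ℚ) * (Nat.factorial (v+1-(k+1)) : ℚ))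
          * (((2*(k+1)).choose ((k+1)-u)) : ℚ) = ((2*(k+1)).choose ((k+1)-u) : ℚ) := by
        rw [Nat.sub_self, pow_zero, one_mul, div_self (by positivity), one_mul]
      rw [hterm]
      have hterm2 : ∀ j ∈ Finset.Icc u k,
          (-2:ℚ)^((k+1)-j) * ((Nat.factorial (k+1) : ℚ) * (Nat.factorial (v+1-(k+1)) : ℚ)) / ((Nat.factorial j : ℚ) * (Nat.factorial (v+1-j) : ℚ))
            * (((2*j).choose (j-u)) : ℚ)
          = -((2 * ((k+1 : ℕ):ℚ) / ((v:ℚ) + 2 - ((k+1:ℕ):ℚ))) *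
              ((-2:ℚ)^(k-j) * ((Nat.factorial k : ℚ) * (Nat.factorial (v+1-k) : ℚ)) / ((Nat.factorial j : ℚ) * (Nat.factorial (v+1-j) : ℚ))
                * (((2*j).choose (j-u)) : ℚ))) := by
        intro j hj
        obtain ⟨hju, hjk⟩ := Finset.mem_Icc.mp hj
        have h1 : (k+1) - j = (k - j) + 1 := by omega
        have h2 : v + 1 - k = (v - k) + 1 := by omega
        have h3 : v + 1 - (k+1) = v - k := by omega
        have h4 : Nat.factorial (k+1) = (k+1) * Nat.factorial k := Nat.factorial_succ k
        have h5 : Nat.factorial (v+1-k) = (v+1-k) * Nat.factorial (v-k) := by rw [h2, Nat.factorial_succ, ← h2]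
        have hcast : ((v:ℚ) + 2 - ((k+1:ℕ):ℚ)) = ((v+1-k : ℕ) : ℚ) := by
          have hh : ((v+1-k : ℕ) : ℚ) = (v:ℚ) + 1 - (k:ℚ) := by
            rw [Nat.cast_sub (by omega)]; push_cast; ring
          rw [hh]; push_cast; ring
        rw [h1, h3, h4, h5, hcast]
        have hne : ((v+1-k : ℕ) : ℚ) ≠ 0 := by
          rw [Nat.cast_ne_zero]; omega
        push_cast
        field_simp
        ring
      rw [Finset.sum_congr rfl hterm2, Finset.mul_sum]
      rw [Finset.sum_neg_distrib]
      ring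
  have hpar' : Odd (v + 1 - u) := by
    have : v + 1 - u = (v - u) + 1 := by omega
    rw [this]; exact Even.add_one hpar
  rw [hmain (v+1) (by omega) le_rfl, hE]
  beta_reduce
  have : ∀ j ∈ Finset.Icc u (v+1),
      (-2:ℚ)^((v+1)-j) * ((Nat.factorial (v+1) : ℚ) * (Nat.factorial (v+1-(v+1)) : ℚ)) / ((Nat.factorial j : ℚ) * (Nat.factorial (v+1-j) : ℚ))
        * (((2*j).choose (j-u)) : ℚ)
      = (-2:ℚ)^((v+1)-j) * ((v+1).choose j : ℚ) * (((2*j).choose (j-u)) : ℚ) := by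
    intro j hj
    obtain ⟨hju, hjv⟩ := Finset.mem_Icc.mp hj
    rw [Nat.sub_self, Nat.factorial_zero, Nat.cast_one, mul_one]
    rw [Nat.cast_choose ℚ hjv]
    ring
  rw [Finset.sum_congr rfl this]
  exact keyA u (v+1) (by omega) hpar'
end

section
/- Define Q̃_i(X) = e_i(x₁,...,x_n) (elementary symmetric polynomial) and for i ≥ j ≥ 0, Q̃_{i,j}(X) = Q̃_i Q̃_j + 2 ∑_{k=1}^{j} (-1)^k Q̃_{i+k} Q̃_{j-k}. Then for every i with 1 ≤ i ≤ n, Q̃_{i,i}(X) equals e_i(x₁², ..., x_n²), the i-th elementary symmetric polynomial in the squares of the variables. -/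
open MvPolynomial

/-- The `i`-th elementary symmetric polynomial in the variables `{X j : j ∈ S}`,
i.e. `Q̃_i` on the variable set `S`. -/
noncomputable def Qt (S : Finset ℕ) (i : ℕ) : MvPolynomial ℕ ℤ :=
  ∑ t ∈ Finset.powersetCard i S, ∏ j ∈ t, X j

/-- The two-row `Q̃`-polynomial
`Q̃_{i,j} = Q̃_i Q̃_j + 2 ∑_{k=1}^{j} (-1)^k Q̃_{i+k} Q̃_{j-k}` (for `i ≥ j`). -/
noncomputable def Qtp (S : Finset ℕ) (i j : ℕ) : MvPolynomial ℕ ℤ :=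
  Qt S i * Qt S j +
    2 * ∑ k ∈ Finset.Icc 1 j, (-1 : MvPolynomial ℕ ℤ) ^ k * Qt S (i + k) * Qt S (j - k)

/-- Fuel-based Laplace (Pfaffian) recursion for `Q̃_λ` on a list of parts of even
length: `Q̃_ν = ∑_{j} (-1)^{j-1} Q̃_{ν_j,ν_r} Q̃_{ν∖{ν_j,ν_r}}`. -/
noncomputable def Qpf (S : Finset ℕ) : ℕ → List ℕ → MvPolynomial ℕ ℤ
  | 0, _ => 1
  | fuel + 1, l =>
    if l.length < 2 then 1
    else
      ∑ j ∈ Finset.range (l.length - 1),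
        (-1 : MvPolynomial ℕ ℤ) ^ j * Qtp S (l.getD j 0) (l.getLast?.getD 0) *
          Qpf S fuel (l.dropLast.eraseIdx j)

/-- `Q̃_λ` for a partition `λ` (list of parts), padding with a zero part
to make the length even. -/
noncomputable def Qlam (S : Finset ℕ) (l : List ℕ) : MvPolynomial ℕ ℤ :=
  Qpf S (l.length + 1) (if Even l.length then l else l ++ [0])

/-!
With `E(t) = ∏ⱼ (1 + xⱼ t)`, the product `E(t) E(-t) = ∏ⱼ (1 - xⱼ² t²)` has `t^(2i)`-coefficient
`∑ₖ (-1)^k eₖ e_{2i-k}` on one side and `(-1)^i eᵢ(x²)` on the other. The summand is invariant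
under `k ↦ 2i - k`, so folding the sum about its middle term `k = i` gives `(-1)^i Q̃_{i,i}`.
-/

theorem neg_one_pow_eq_of_mod_two_eq {R : Type*} [Ring R] {a b : ℕ}
    (h : a % 2 = b % 2) : (-1 : R) ^ a = (-1) ^ b := by
  rw [neg_one_pow_eq_pow_mod_two, h, ← neg_one_pow_eq_pow_mod_two]

namespace Multiset

variable {R : Type*} [CommRing R]

theorem esymm_zero (s : Multiset R) : s.esymm 0 = 1 := by
  simp [esymm, powersetCard_zero_left]

theorem esymm_cons_succ (a : R) (s : Multiset R) (k : ℕ) :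
    (a ::ₘ s).esymm (k + 1) = s.esymm (k + 1) + a * s.esymm k := by
  simp [esymm, powersetCard_cons, sum_map_mul_left]

theorem coeff_prod_map_one_add_C_mul_X (s : Multiset R) (k : ℕ) :
    (s.map fun r => 1 + Polynomial.C r * Polynomial.X).prod.coeff k = s.esymm k := by
  induction s using Multiset.induction_on generalizing k with
  | empty => cases k <;> simp [esymm, Polynomial.coeff_one, powersetCard_zero_right]
  | cons a s ih =>
    cases k with
    | zero => simp [Polynomial.mul_coeff_zero, ih 0, esymm_zero]
    | succ k =>
      simp [esymm_cons_succ, add_mul, mul_assoc, ih, Polynomial.coeff_C_mul,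
        Polynomial.coeff_X_mul]

theorem sum_range_neg_one_pow_mul_esymm_mul_esymm (s : Multiset R) (i : ℕ) :
    ∑ k ∈ Finset.range (2 * i + 1), (-1) ^ k * s.esymm k * s.esymm (2 * i - k)
      = (-1) ^ i * (s.map (· ^ 2)).esymm i := by
  have hgen : (s.map fun r => 1 + Polynomial.C r * Polynomial.X).prod *
        ((s.map Neg.neg).map fun r => 1 + Polynomial.C r * Polynomial.X).prod
      = Polynomial.expand R 2
          (((s.map (· ^ 2)).map Neg.neg).map fun r => 1 + Polynomial.C r * Polynomial.X).prod := by
    simp only [map_map, map_multiset_prod, ← prod_map_mul]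
    congr 1
    refine map_congr rfl fun r _ => ?_
    simp only [Function.comp_apply, _root_.map_add, _root_.map_one, _root_.map_mul,
      Polynomial.expand_C, Polynomial.expand_X, _root_.map_neg, _root_.map_pow]
    ring
  have := congrArg (Polynomial.coeff · (2 * i)) hgen
  simp only [Polynomial.coeff_mul, Finset.Nat.sum_antidiagonal_eq_sum_range_succ_mk,
    Polynomial.coeff_expand_mul' two_pos, coeff_prod_map_one_add_C_mul_X, esymm_neg] at this
  rw [← this]
  refine Finset.sum_congr rfl fun k hk => ?_
  rw [neg_one_pow_eq_of_mod_two_eq (a := 2 * i - k) (b := k) (by grind)]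
  ring

end Multiset

theorem sum_range_neg_one_pow_mul_mul_sub_eq {R : Type*} [CommRing R] (e : ℕ → R) (i : ℕ) :
    ∑ k ∈ Finset.range (2 * i + 1), (-1) ^ k * e k * e (2 * i - k)
      = (-1) ^ i *
          (e i * e i + 2 * ∑ k ∈ Finset.Icc 1 i, (-1) ^ k * e (i + k) * e (i - k)) := by
  set f : ℕ → R := fun k => (-1) ^ k * e k * e (2 * i - k) with hf
  have hsymm : ∀ m ∈ Finset.range i, f (i - 1 - m) = f (i + (m + 1)) := by
    intro m hm
    rw [Finset.mem_range] at hm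
    simp only [hf, neg_one_pow_eq_of_mod_two_eq (R := R) (a := i - 1 - m) (b := i + (m + 1))
      (by omega), show 2 * i - (i - 1 - m) = i + (m + 1) by omega,
      show 2 * i - (i + (m + 1)) = i - 1 - m by omega]
    ring
  have hshift : ∀ m ∈ Finset.range i, f (i + (m + 1))
      = (-1) ^ i * ((-1) ^ (m + 1) * e (i + (m + 1)) * e (i - (m + 1))) := by
    intro m hm
    simp only [hf, pow_add (-1 : R) i, show 2 * i - (i + (m + 1)) = i - (m + 1) by omega]
    ring
  calc ∑ k ∈ Finset.range (2 * i + 1), f k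
      = ∑ k ∈ Finset.range i, f k + ∑ m ∈ Finset.range (i + 1), f (i + m) := by
        rw [show 2 * i + 1 = i + (i + 1) by ring, Finset.sum_range_add]
    _ = f i + 2 * ∑ m ∈ Finset.range i, f (i + (m + 1)) := by
        rw [Finset.sum_range_succ', ← Finset.sum_range_reflect, Finset.sum_congr rfl hsymm,
          add_zero]
        ring
    _ = _ := by
        rw [Finset.sum_congr rfl hshift, ← Finset.mul_sum, Finset.range_eq_Ico,
          Finset.sum_Ico_add' (fun k => (-1) ^ k * e (i + k) * e (i - k))]
        simp only [hf, show 2 * i - i = i by omega, ← Finset.Ico_add_one_right_eq_Icc]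
        ring

theorem Qt_eq_esymm (S : Finset ℕ) (k : ℕ) : Qt S k = (S.val.map X).esymm k :=
  (Finset.esymm_map_val X S k).symm

theorem Qtp_diag_eq_esymm_squares_general (n i : ℕ) :
    Qtp (Finset.range n) i i
      = ∑ t ∈ Finset.powersetCard i (Finset.range n), ∏ j ∈ t, (X j : MvPolynomial ℕ ℤ) ^ 2 := by
  set S := Finset.range n
  have hsign : (-1 : MvPolynomial ℕ ℤ) ^ i * (-1) ^ i = 1 := by
    rw [← pow_add, Even.neg_one_pow ⟨i, rfl⟩]
  calc Qtp S i i
      = (-1) ^ i * ((-1) ^ i * Qtp S i i) := by rw [← mul_assoc, hsign, one_mul]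
    _ = (-1) ^ i * ∑ k ∈ Finset.range (2 * i + 1), (-1) ^ k * Qt S k * Qt S (2 * i - k) := by
        rw [sum_range_neg_one_pow_mul_mul_sub_eq, Qtp]
    _ = ((S.val.map X).map (· ^ 2)).esymm i := by
        simp only [Qt_eq_esymm]
        rw [Multiset.sum_range_neg_one_pow_mul_esymm_mul_esymm, ← mul_assoc, hsign, one_mul]
    _ = _ := by rw [Multiset.map_map, Finset.esymm_map_val]; rfl

/-- `Q̃_{i,i}(X) = e_i(x₁², …, x_n²)` for `1 ≤ i ≤ n`, in `ℤ[x₁,…,x_n]`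
(the variable set being `X = {X 0, …, X (n-1)}`). -/
theorem Qtp_diag_eq_esymm_squares (n i : ℕ) (h1 : 1 ≤ i) (h2 : i ≤ n) :
    Qtp (Finset.range n) i i
      = ∑ t ∈ Finset.powersetCard i (Finset.range n), ∏ j ∈ t, (X j : MvPolynomial ℕ ℤ) ^ 2 :=
  Qtp_diag_eq_esymm_squares_general n i
end

section
/- For a > b > 0, the composite divided difference ∂₀∂₁'∂₀ applied to Q̃_{a,b}(x₁,...,x_n) equals Q̃_{a-2}(X'')Q̃_{b-1}(X'') - Q̃_{a-1}(X'')Q̃_{b-2}(X''), where X'' = (x₃,...,x_n). -/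
open MvPolynomial

/-- `Q̃_i` with integer index, vanishing for `i < 0`. -/
noncomputable def QtZ (S : Finset ℕ) (i : ℤ) : MvPolynomial ℕ ℤ :=
  if 0 ≤ i then Qt S i.toNat else 0

/-- `Q̃_{i,j}` with integer indices (`i ≥ j`), vanishing when an index is negative. -/
noncomputable def QtpZ (S : Finset ℕ) (i j : ℤ) : MvPolynomial ℕ ℤ :=
  QtZ S i * QtZ S j +
    2 * ∑ k ∈ Finset.Icc 1 j.toNat,
      (-1 : MvPolynomial ℕ ℤ) ^ k * QtZ S (i + k) * QtZ S (j - k)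

/-- The operator `s₀`, replacing `x₁ = X 0` by `-x₁`. -/
noncomputable def s0 : MvPolynomial ℕ ℤ →+* MvPolynomial ℕ ℤ :=
  (MvPolynomial.bind₁ fun j => if j = 0 then -(X 0 : MvPolynomial ℕ ℤ) else X j).toRingHom

/-- The operator `s₁`, swapping `x₁ = X 0` and `x₂ = X 1`. -/
noncomputable def s1 : MvPolynomial ℕ ℤ →+* MvPolynomial ℕ ℤ :=
  (MvPolynomial.bind₁ fun j =>
    if j = 0 then (X 1 : MvPolynomial ℕ ℤ) else if j = 1 then X 0 else X j).toRingHom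

/-! Write `X' = (x₂,…,x_n)` and `X'' = (x₃,…,x_n)`. Since `Q̃_i(X) = Q̃_i(X') + x₁ Q̃_{i-1}(X')`
and `s₀` only flips the sign of `x₁`, the alternating sum in `Q̃_{a,b}` telescopes under `1 - s₀`,
and `∂₀ Q̃_{a,b} = Q̃_{a-1}(X') Q̃_b(X') - Q̃_a(X') Q̃_{b-1}(X')`. Expanding `X'` over `x₂` the same
way, `∂₁'` and then `∂₀` of this `2 × 2` minor are direct polynomial identities. -/

section Telescoping

variable {R : Type*} [CommRing R]

/-- `Q̃_{a,b}` built from an arbitrary sequence `f` in place of `i ↦ Q̃_i`. -/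
def qPair (f : ℤ → R) (a b : ℤ) : R :=
  f a * f b + 2 * ∑ k ∈ Finset.Icc 1 b.toNat, (-1 : R) ^ k * f (a + k) * f (b - k)

lemma map_qPair {S : Type*} [CommRing S] (φ : R →+* S) (f : ℤ → R) (a b : ℤ) :
    φ (qPair f a b) = qPair (φ ∘ f) a b := by
  simp [qPair, map_sum, map_ofNat]

lemma sum_Icc_neg_one_pow_mul_telescope (E : ℤ → R) (a b : ℤ) (N : ℕ) :
    ∑ k ∈ Finset.Icc 1 N, (-1 : R) ^ k * (E (a + k) * E (b - k - 1) + E (a + k - 1) * E (b - k))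
      = (-1) ^ N * (E (a + N) * E (b - N - 1)) - E a * E (b - 1) := by
  induction N with
  | zero => simp
  | succ N ih =>
    rw [Finset.sum_Icc_succ_top (by omega), ih]
    push_cast
    ring_nf

lemma qPair_sub_qPair_of_reflect (E : ℤ → R) (hE : ∀ i < 0, E i = 0) (x : R) (a b : ℤ) :
    qPair (fun i => E i + x * E (i - 1)) a b - qPair (fun i => E i - x * E (i - 1)) a b
      = 2 * x * (E (a - 1) * E b - E a * E (b - 1)) := by
  have hsum := sum_Icc_neg_one_pow_mul_telescope E a b b.toNat
  -- `b - b.toNat ≤ 0` also for `b < 0`, so the boundary term of the telescoping sum vanishes.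
  rw [hE (b - b.toNat - 1) (by omega), mul_zero, mul_zero, zero_sub] at hsum
  have hdiff : ∑ k ∈ Finset.Icc 1 b.toNat,
        (-1 : R) ^ k * (E (a + k) + x * E (a + k - 1)) * (E (b - k) + x * E (b - k - 1))
      - ∑ k ∈ Finset.Icc 1 b.toNat,
        (-1 : R) ^ k * (E (a + k) - x * E (a + k - 1)) * (E (b - k) - x * E (b - k - 1))
      = 2 * x * ∑ k ∈ Finset.Icc 1 b.toNat,
        (-1 : R) ^ k * (E (a + k) * E (b - k - 1) + E (a + k - 1) * E (b - k)) := by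
    rw [← Finset.sum_sub_distrib, Finset.mul_sum]
    exact Finset.sum_congr rfl fun k _ => by ring
  unfold qPair
  linear_combination 2 * hdiff + 4 * x * hsum

end Telescoping

lemma Qt_zero (S : Finset ℕ) : Qt S 0 = 1 := by
  simp [Qt]

lemma Qt_insert_succ {j : ℕ} {S : Finset ℕ} (hj : j ∉ S) (i : ℕ) :
    Qt (insert j S) (i + 1) = Qt S (i + 1) + X j * Qt S i := by
  have hjt : ∀ t ∈ Finset.powersetCard i S, j ∉ t := fun t ht h =>
    hj ((Finset.mem_powersetCard.1 ht).1 h)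
  unfold Qt
  rw [Finset.powersetCard_succ_insert hj, Finset.sum_union, Finset.sum_image, Finset.mul_sum]
  · exact congrArg _ (Finset.sum_congr rfl fun t ht => Finset.prod_insert (hjt t ht))
  · intro t ht u hu htu
    rw [← Finset.erase_insert (hjt t ht), ← Finset.erase_insert (hjt u hu), htu]
  · refine Finset.disjoint_right.2 fun t ht ht' => ?_
    obtain ⟨u, -, rfl⟩ := Finset.mem_image.1 ht
    exact hj ((Finset.mem_powersetCard.1 ht').1 (Finset.mem_insert_self j u))

lemma QtZ_of_neg {S : Finset ℕ} {i : ℤ} (hi : i < 0) : QtZ S i = 0 := by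
  simp [QtZ, not_le.2 hi]

lemma QtZ_insert {j : ℕ} {S : Finset ℕ} (hj : j ∉ S) (i : ℤ) :
    QtZ (insert j S) i = QtZ S i + X j * QtZ S (i - 1) := by
  obtain hi | rfl | hi := lt_trichotomy i 0
  · simp [QtZ_of_neg hi, QtZ_of_neg (show i - 1 < 0 by omega)]
  · simp [QtZ, Qt_zero]
  · obtain ⟨m, rfl⟩ : ∃ m : ℕ, i = m + 1 := ⟨(i - 1).toNat, by omega⟩
    simpa [QtZ, show (0 : ℤ) ≤ m + 1 by omega, show ((m : ℤ) + 1).toNat = m + 1 by omega] using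
      Qt_insert_succ hj m

lemma map_QtZ_of_forall_mem {S : Finset ℕ} (φ : MvPolynomial ℕ ℤ →+* MvPolynomial ℕ ℤ)
    (hφ : ∀ j ∈ S, φ (X j) = X j) (i : ℤ) : φ (QtZ S i) = QtZ S i := by
  unfold QtZ Qt
  split_ifs
  · rw [map_sum]
    refine Finset.sum_congr rfl fun t ht => ?_
    rw [map_prod]
    exact Finset.prod_congr rfl fun j hj => hφ j ((Finset.mem_powersetCard.1 ht).1 hj)
  · exact map_zero φ

lemma s0_X_zero : s0 (X 0) = -X 0 := by simp [s0]

lemma s0_X_of_ne {j : ℕ} (hj : j ≠ 0) : s0 (X j) = X j := by simp [s0, hj]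

lemma s1_X_one : s1 (X 1) = X 0 := by simp [s1]

lemma s1_X_of_ne {j : ℕ} (h0 : j ≠ 0) (h1 : j ≠ 1) : s1 (X j) = X j := by simp [s1, h0, h1]

lemma s0_QtZ {S : Finset ℕ} (h : 0 ∉ S) (i : ℤ) : s0 (QtZ S i) = QtZ S i :=
  map_QtZ_of_forall_mem s0 (fun _ hj => s0_X_of_ne (by rintro rfl; exact h hj)) i

lemma s1_QtZ {S : Finset ℕ} (h0 : 0 ∉ S) (h1 : 1 ∉ S) (i : ℤ) : s1 (QtZ S i) = QtZ S i :=
  map_QtZ_of_forall_mem s1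
    (fun _ hj => s1_X_of_ne (by rintro rfl; exact h0 hj) (by rintro rfl; exact h1 hj)) i

section DividedDifferences

variable {S : Finset ℕ}

lemma QtpZ_sub_s0_insert_zero (h0 : 0 ∉ S) (a b : ℤ) :
    QtpZ (insert 0 S) a b - s0 (QtpZ (insert 0 S) a b)
      = 2 * X 0 * (QtZ S (a - 1) * QtZ S b - QtZ S a * QtZ S (b - 1)) := by
  have hs0 : s0 ∘ QtZ (insert 0 S) = fun i => QtZ S i - X 0 * QtZ S (i - 1) := by
    ext1 i
    simp only [Function.comp_apply, QtZ_insert h0, map_add, map_mul, s0_X_zero, s0_QtZ h0]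
    ring
  change qPair _ a b - s0 (qPair _ a b) = _
  rw [map_qPair, hs0, funext (QtZ_insert h0)]
  exact qPair_sub_qPair_of_reflect _ (fun _ hi => QtZ_of_neg hi) _ a b

lemma minor_sub_s1_insert_one (h0 : 0 ∉ S) (h1 : 1 ∉ S) (a b : ℤ) :
    let E := QtZ (insert 1 S)
    (E (a - 1) * E b - E a * E (b - 1)) - s1 (E (a - 1) * E b - E a * E (b - 1))
      = (X 1 - X 0) * ((QtZ S (a - 2) * QtZ S b - QtZ S a * QtZ S (b - 2))
        + (X 1 + X 0) * (QtZ S (a - 2) * QtZ S (b - 1) - QtZ S (a - 1) * QtZ S (b - 2))) := by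
  simp only [map_sub, map_mul, QtZ_insert h1, map_add, s1_X_one, s1_QtZ h0 h1,
    show a - 1 - 1 = a - 2 by ring, show b - 1 - 1 = b - 2 by ring]
  ring

lemma sub_s0_add_X_one_add_X_zero_mul (h0 : 0 ∉ S) (a b : ℤ) :
    let M := QtZ S (a - 2) * QtZ S (b - 1) - QtZ S (a - 1) * QtZ S (b - 2)
    let P := QtZ S (a - 2) * QtZ S b - QtZ S a * QtZ S (b - 2)
    (P + (X 1 + X 0) * M) - s0 (P + (X 1 + X 0) * M) = 2 * X 0 * M := by
  simp only [map_add, map_sub, map_mul, s0_QtZ h0, s0_X_zero, s0_X_of_ne one_ne_zero]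
  ring

end DividedDifferences

/-- The divided differences `∂₀(f) = (f - s₀f)/(2x₁)` and `∂₁'(f) = (f - s₁f)/(x₂ - x₁)` are
encoded by the (unique) quotients `g₁, g₂, g₃`. -/
theorem Cdoubleprime_pair_formula_general (n : ℕ) (hn : 2 ≤ n) (a b : ℤ)
    (g1 g2 g3 : MvPolynomial ℕ ℤ)
    (h1 : QtpZ (Finset.range n) a b - s0 (QtpZ (Finset.range n) a b) = 2 * X 0 * g1)
    (h2 : g1 - s1 g1 = (X 1 - X 0) * g2)
    (h3 : g2 - s0 g2 = 2 * X 0 * g3) :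
    g3 = QtZ (Finset.Ico 2 n) (a - 2) * QtZ (Finset.Ico 2 n) (b - 1)
        - QtZ (Finset.Ico 2 n) (a - 1) * QtZ (Finset.Ico 2 n) (b - 2) := by
  have hrange : Finset.range n = insert 0 (insert 1 (Finset.Ico 2 n)) := by
    ext i; simp only [Finset.mem_range, Finset.mem_insert, Finset.mem_Ico]; omega
  have h0S : 0 ∉ Finset.Ico 2 n := by simp
  have h1S : 1 ∉ Finset.Ico 2 n := by simp
  have h2X0 : (2 * X 0 : MvPolynomial ℕ ℤ) ≠ 0 := mul_ne_zero two_ne_zero (X_ne_zero 0)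
  have hX1X0 : (X 1 - X 0 : MvPolynomial ℕ ℤ) ≠ 0 := sub_ne_zero.2 (X_injective.ne one_ne_zero)
  rw [hrange, QtpZ_sub_s0_insert_zero (by simp [h0S]) a b] at h1
  have hg1 := mul_left_cancel₀ h2X0 h1
  rw [← hg1, minor_sub_s1_insert_one h0S h1S a b] at h2
  have hg2 := mul_left_cancel₀ hX1X0 h2
  rw [← hg2, sub_s0_add_X_one_add_X_zero_mul h0S a b] at h3
  exact (mul_left_cancel₀ h2X0 h3).symm

/-- `∂₀∂₁'∂₀(Q̃_{a,b}) = Q̃_{a-2}(X'')Q̃_{b-1}(X'') - Q̃_{a-1}(X'')Q̃_{b-2}(X'')`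
for `a > b > 0`, where `X'' = (x₃,…,x_n)`.  The divided differences
`∂₀(f) = (f - s₀f)/(2x₁)` and `∂₁'(f) = (f - s₁f)/(x₂ - x₁)` are encoded by
the (unique) quotients `g₁, g₂, g₃`. -/
theorem Cdoubleprime_pair_formula (n : ℕ) (hn : 2 ≤ n) (a b : ℤ) (hb : 0 < b) (hab : b < a)
    (g1 g2 g3 : MvPolynomial ℕ ℤ)
    (h1 : QtpZ (Finset.range n) a b - s0 (QtpZ (Finset.range n) a b) = 2 * X 0 * g1)
    (h2 : g1 - s1 g1 = (X 1 - X 0) * g2)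
    (h3 : g2 - s0 g2 = 2 * X 0 * g3) :
    g3 = QtZ (Finset.Ico 2 n) (a - 2) * QtZ (Finset.Ico 2 n) (b - 1)
        - QtZ (Finset.Ico 2 n) (a - 1) * QtZ (Finset.Ico 2 n) (b - 2) :=
  Cdoubleprime_pair_formula_general n hn a b g1 g2 g3 h1 h2 h3
end

section
/- Factorization property of Q̃-polynomials: for any partition λ = (λ₁,...,λ_r) with all λ_i ≤ n and any i, if λ⁺ = λ ∪ (i,i) denotes the partition obtained by inserting two parts equal to i, then Q̃_{λ⁺}(X) = Q̃_{i,i}(X)·Q̃_λ(X) in ℤ[x₁,...,x_n]. -/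
open MvPolynomial

/-!
`Q̃_λ` is the Pfaffian of the array `(Q̃_{λ_j,λ_k})_{j<k}`, computed by Laplace expansion along
the last entry, and the factorization holds for such Pfaffians of an arbitrary array `f`:
`Pf(a ++ i :: i :: b) = f i i · Pf(a ++ b)` whenever the length is even. Induct on `b`,
expanding along its last entry `t`: the two terms coming from the copies of `i` are equal with
opposite signs, and every other term factors by induction. For `b = []` the expansion of
`Pf(a ++ [i, i])` along the last `i` leaves `f i i · Pf a` plus `∑ⱼ ± f aⱼ i · Pf(a∖aⱼ ++ [i])`,
and expanding once more along `i` turns this sum into one over ordered pairs of distinct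
indices of `a` whose terms cancel under swapping the pair. Finally, a sorted `λ⁺` is `λ` with
`i, i` inserted at its sorted position.
-/

open Finset

namespace List

variable {α : Type*}

theorem getD_eraseIdx (l : List α) (d : α) (i j : ℕ) :
    (l.eraseIdx i).getD j d = if j < i then l.getD j d else l.getD (j + 1) d := by
  simp only [getD_eq_getElem?_getD, getElem?_eraseIdx]
  split_ifs <;> rfl

theorem eraseIdx_eraseIdx_of_le (l : List α) {i j : ℕ} (h : i ≤ j) :
    (l.eraseIdx (j + 1)).eraseIdx i = (l.eraseIdx i).eraseIdx j := by
  ext n : 1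
  simp only [getElem?_eraseIdx]
  split_ifs <;> first | rfl | omega

theorem Pairwise.exists_append_pairwise_insert_pair [LinearOrder α] (x : α)
    {l : List α} (hl : l.Pairwise (· ≥ ·)) :
    ∃ a b, l = a ++ b ∧ (a ++ x :: x :: b).Pairwise (· ≥ ·) := by
  induction l with
  | nil => exact ⟨[], [], rfl, by simp⟩
  | cons y l ih =>
    rw [pairwise_cons] at hl
    by_cases hxy : x ≤ y
    · obtain ⟨a, b, rfl, hab⟩ := ih hl.2
      refine ⟨y :: a, b, rfl, ?_⟩
      rw [cons_append, pairwise_cons]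
      refine ⟨?_, hab⟩
      simp only [mem_append, mem_cons] at hl ⊢
      rintro z (hz | rfl | rfl | hz)
      exacts [hl.1 z (.inl hz), hxy, hxy, hl.1 z (.inr hz)]
    · refine ⟨[], y :: l, rfl, ?_⟩
      simp only [nil_append, pairwise_cons, mem_cons]
      grind

end List

/-- A pair `(j, k)` stands for the ordered pair of distinct indices `(j, k')` of `range n`, where
`k` indexes `range n` with `j` removed; `hg` says that swapping the two indices flips the sign. -/
theorem Finset.sum_range_sum_range_pred_eq_zero {M : Type*} [AddCommGroup M] (n : ℕ)
    (g : ℕ → ℕ → M) (hg : ∀ j k, k < j → j < n → g j k = -g k (j - 1)) :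
    ∑ j ∈ range n, ∑ k ∈ range (n - 1), g j k = 0 := by
  rw [← sum_product']
  refine sum_involution (fun p _ => if p.2 < p.1 then (p.2, p.1 - 1) else (p.2 + 1, p.1))
    ?_ ?_ ?_ ?_ <;> rintro ⟨j, k⟩ hp <;> simp only [mem_product, mem_range] at hp ⊢ <;>
    by_cases hkj : k < j <;> simp only [hkj, ↓reduceIte]
  · rw [hg j k hkj hp.1, neg_add_cancel]
  · rw [hg (k + 1) j (by omega) (by omega), Nat.add_sub_cancel, add_neg_cancel]
  · exact fun _ h ↦ by simp only [Prod.mk.injEq] at h; omega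
  · exact fun _ h ↦ by simp only [Prod.mk.injEq] at h; omega
  · omega
  · omega
  · rw [if_neg (by omega), Nat.sub_add_cancel (by omega)]
  · rw [if_pos (by omega), Nat.add_sub_cancel]

section Pfaffian

variable {α R : Type*} [Inhabited α] [CommRing R] (f : α → α → R)

/-- Laplace expansion along the last entry. Only the values `f l[j] l[k]` with `j < k` enter,
so `f` need not be skew-symmetric. -/
noncomputable def pfaffian (l : List α) : R :=
  if h : l.length < 2 then 1
  else ∑ j ∈ range (l.length - 1),
    (-1) ^ j * f (l.getD j default) (l.getLast?.getD default) * pfaffian (l.dropLast.eraseIdx j)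
termination_by l.length
decreasing_by
  have := List.length_eraseIdx_le l.dropLast j
  simp only [List.length_dropLast] at this
  omega

theorem pfaffian_of_length_lt_two {l : List α} (h : l.length < 2) : pfaffian f l = 1 := by
  rw [pfaffian, dif_pos h]

theorem pfaffian_append_singleton {m : List α} (hm : m ≠ []) (t : α) :
    pfaffian f (m ++ [t]) =
      ∑ j ∈ range m.length, (-1) ^ j * f (m.getD j default) t * pfaffian f (m.eraseIdx j) := by
  have hlen : ¬ (m ++ [t]).length < 2 := by
    have := List.length_pos_iff.2 hm
    simp only [List.length_append, List.length_singleton]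
    omega
  rw [pfaffian, dif_neg hlen]
  simp only [List.length_append, List.length_singleton, Nat.add_sub_cancel,
    List.getLast?_concat, Option.getD_some, List.dropLast_concat]
  refine sum_congr rfl fun j hj => ?_
  rw [List.getD_append _ _ _ _ (mem_range.1 hj)]

theorem pfaffian_append_append_singleton {a c : List α} (h : a ++ c ≠ []) (t : α) :
    pfaffian f (a ++ c ++ [t]) =
      (∑ j ∈ range a.length,
          (-1) ^ j * f (a.getD j default) t * pfaffian f (a.eraseIdx j ++ c)) +
        ∑ j ∈ range c.length,
          (-1) ^ (a.length + j) * f (c.getD j default) t * pfaffian f (a ++ c.eraseIdx j) := by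
  rw [pfaffian_append_singleton f h, List.length_append, sum_range_add]
  congr 1 <;> refine sum_congr rfl fun j hj => ?_
  · rw [List.getD_append _ _ _ _ (mem_range.1 hj),
      List.eraseIdx_append_of_lt_length (mem_range.1 hj)]
  · rw [List.getD_append_right _ _ _ _ (by omega), List.eraseIdx_append_of_length_le (by omega),
      Nat.add_sub_cancel_left]

theorem sum_pfaffian_eraseIdx_append_eq_zero {a : List α} (ha : Even a.length) (t : α) :
    ∑ j ∈ range a.length,
      (-1) ^ j * f (a.getD j default) t * pfaffian f (a.eraseIdx j ++ [t]) = 0 := by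
  have expand : ∀ j ∈ range a.length, pfaffian f (a.eraseIdx j ++ [t]) =
      ∑ k ∈ range (a.length - 1), (-1) ^ k * f ((a.eraseIdx j).getD k default) t *
        pfaffian f ((a.eraseIdx j).eraseIdx k) := by
    intro j hj
    have hlen := List.length_eraseIdx_of_lt (mem_range.1 hj)
    have hne : a.eraseIdx j ≠ [] := by
      obtain ⟨w, hw⟩ := ha
      rw [← List.length_pos_iff, hlen]
      grind
    rw [pfaffian_append_singleton f hne t, hlen]
  rw [sum_congr rfl fun j hj => by rw [expand j hj, mul_sum]]
  refine sum_range_sum_range_pred_eq_zero _ _ fun j k hkj hj => ?_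
  obtain ⟨j, rfl⟩ : ∃ j', j = j' + 1 := ⟨j - 1, by omega⟩
  rw [List.getD_eraseIdx, List.getD_eraseIdx, if_pos hkj, if_neg (by omega), Nat.add_sub_cancel,
    List.eraseIdx_eraseIdx_of_le a (by omega : k ≤ j)]
  ring

theorem pfaffian_append_pair {a : List α} (ha : Even a.length) (i : α) :
    pfaffian f (a ++ [i, i]) = f i i * pfaffian f a := by
  rw [show a ++ [i, i] = a ++ [i] ++ [i] by simp,
    pfaffian_append_append_singleton f (by simp), sum_pfaffian_eraseIdx_append_eq_zero f ha]
  simp [ha.neg_one_pow]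

theorem pfaffian_insert_pair (i : α) {a b : List α} (h : Even (a.length + b.length)) :
    pfaffian f (a ++ i :: i :: b) = f i i * pfaffian f (a ++ b) := by
  induction hn : b.length using Nat.strong_induction_on generalizing a b with
  | _ n ih =>
  rcases b.eq_nil_or_concat' with rfl | ⟨c, t, rfl⟩
  · simpa using pfaffian_append_pair f (by simpa using h) i
  obtain ⟨w, hw⟩ := h
  simp only [List.length_append, List.length_singleton] at hn hw
  have hac : a ++ c ≠ [] := by
    rw [← List.length_pos_iff, List.length_append]
    omega
  have left : ∑ j ∈ range a.length,
        (-1) ^ j * f (a.getD j default) t * pfaffian f (a.eraseIdx j ++ i :: i :: c) =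
      f i i * ∑ j ∈ range a.length,
        (-1) ^ j * f (a.getD j default) t * pfaffian f (a.eraseIdx j ++ c) := by
    rw [mul_sum]
    refine sum_congr rfl fun j hj => ?_
    have := List.length_eraseIdx_of_lt (mem_range.1 hj)
    rw [ih c.length (by omega) (a := a.eraseIdx j) ⟨w - 1, by grind⟩ rfl]
    ring
  have right : ∑ j ∈ range c.length, (-1) ^ (a.length + (j + 1 + 1)) * f (c.getD j default) t *
        pfaffian f (a ++ i :: i :: c.eraseIdx j) =
      f i i * ∑ j ∈ range c.length,
        (-1) ^ (a.length + j) * f (c.getD j default) t * pfaffian f (a ++ c.eraseIdx j) := by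
    rw [mul_sum]
    refine sum_congr rfl fun j hj => ?_
    have := List.length_eraseIdx_of_lt (mem_range.1 hj)
    rw [ih (c.eraseIdx j).length (by omega) (b := c.eraseIdx j) ⟨w - 1, by grind⟩ rfl]
    ring
  rw [show a ++ i :: i :: (c ++ [t]) = a ++ i :: i :: c ++ [t] by simp, ← List.append_assoc,
    pfaffian_append_append_singleton f (by simp), pfaffian_append_append_singleton f hac,
    List.length_cons, List.length_cons, sum_range_succ', sum_range_succ']
  simp only [List.getD_cons_succ, List.getD_cons_zero, List.eraseIdx_cons_succ,
    List.eraseIdx_cons_zero]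
  rw [left, right]
  ring

end Pfaffian

theorem Qpf_eq_pfaffian (S : Finset ℕ) {fuel : ℕ} {l : List ℕ} (h : l.length ≤ 2 * fuel + 1) :
    Qpf S fuel l = pfaffian (Qtp S) l := by
  induction fuel generalizing l with
  | zero => rw [Qpf, pfaffian_of_length_lt_two _ (by omega)]
  | succ fuel ih =>
    rw [Qpf, pfaffian]
    split_ifs with hl
    · rfl
    refine sum_congr rfl fun j hj => ?_
    rw [ih]
    · rfl
    rw [List.length_eraseIdx_of_lt (by simpa using hj), List.length_dropLast]
    omega

theorem Qlam_eq_pfaffian (S : Finset ℕ) (l : List ℕ) :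
    Qlam S l = pfaffian (Qtp S) (l ++ List.replicate (l.length % 2) 0) := by
  rw [Qlam, Qpf_eq_pfaffian]
  · congr 1
    split_ifs with h
    · rw [Nat.even_iff.1 h, List.replicate_zero, List.append_nil]
    · rw [Nat.odd_iff.1 (Nat.not_even_iff_odd.1 h), List.replicate_one]
  · split_ifs
    · omega
    · rw [List.length_append, List.length_singleton]
      omega

theorem Qtilde_insert_pair_general (n i : ℕ) (lam lamPlus : List ℕ)
    (hlam : List.Pairwise (· ≥ ·) lam)
    (hplus : List.Pairwise (· ≥ ·) lamPlus) (hperm : lamPlus.Perm (i :: i :: lam)) :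
    Qlam (Finset.range n) lamPlus
      = Qtp (Finset.range n) i i * Qlam (Finset.range n) lam := by
  obtain ⟨a, b, rfl, hsorted⟩ := hlam.exists_append_pairwise_insert_pair i
  obtain rfl : lamPlus = a ++ i :: i :: b :=
    (hperm.trans (List.perm_middle.trans (List.perm_middle.cons i)).symm).eq_of_pairwise
      (fun _ _ _ _ h₁ h₂ ↦ le_antisymm h₂ h₁) hplus hsorted
  have hpad : (a ++ i :: i :: b).length % 2 = (a ++ b).length % 2 := by
    simp only [List.length_append, List.length_cons]
    omega
  rw [Qlam_eq_pfaffian, Qlam_eq_pfaffian, hpad, List.append_assoc, List.append_assoc,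
    List.cons_append, List.cons_append, pfaffian_insert_pair]
  rw [Nat.even_iff, List.length_append, List.length_append, List.length_replicate]
  omega

/-- Factorization property: if `λ⁺ = λ ∪ (i,i)` is obtained from the partition
`λ` (all parts `≤ n`) by inserting two parts equal to `i`, then
`Q̃_{λ⁺} = Q̃_{i,i} · Q̃_λ` in `ℤ[x₁,…,x_n]`. -/
theorem Qtilde_insert_pair (n i : ℕ) (hi : i ≤ n) (lam lamPlus : List ℕ)
    (hlam : List.Pairwise (· ≥ ·) lam) (hle : ∀ a ∈ lam, a ≤ n)
    (hplus : List.Pairwise (· ≥ ·) lamPlus) (hperm : lamPlus.Perm (i :: i :: lam)) :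
    Qlam (Finset.range n) lamPlus
      = Qtp (Finset.range n) i i * Qlam (Finset.range n) lam :=
  Qtilde_insert_pair_general n i lam lamPlus hlam hplus hperm
end

section
/- Vanishing of Q̃-polynomials: if λ is a partition with λ₁ > n, then Q̃_λ(x₁,...,x_n) = 0. -/
open MvPolynomial

/-!
`Q̃_i` vanishes for `i > |S|`, and so does every `Q̃_{i,j}` with `i > |S|`, since each of its
terms has a factor `Q̃_{i+k}`. In the Laplace expansion of the Pfaffian the first part `λ₁` is
either paired off, giving a factor `Q̃_{λ₁,λ_r} = 0`, or stays the first part of the smaller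
Pfaffian, which vanishes by induction.
-/

lemma Qt_eq_zero_of_card_lt {S : Finset ℕ} {i : ℕ} (h : S.card < i) : Qt S i = 0 := by
  rw [Qt, Finset.powersetCard_eq_empty.mpr h, Finset.sum_empty]

lemma Qtp_eq_zero_of_card_lt {S : Finset ℕ} {i : ℕ} (h : S.card < i) (j : ℕ) :
    Qtp S i j = 0 := by
  have hterm : ∀ k ∈ Finset.Icc 1 j,
      (-1 : MvPolynomial ℕ ℤ) ^ k * Qt S (i + k) * Qt S (j - k) = 0 := fun k _ => by
    rw [Qt_eq_zero_of_card_lt (by omega : S.card < i + k), mul_zero, zero_mul]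
  rw [Qtp, Qt_eq_zero_of_card_lt h, Finset.sum_eq_zero hterm]
  ring

lemma List.getD_zero_dropLast_eraseIdx_succ {α : Type*} {l : List α} (hl : 2 ≤ l.length)
    (i : ℕ) (d : α) : (l.dropLast.eraseIdx (i + 1)).getD 0 d = l.getD 0 d := by
  simp only [List.getD_eq_getElem?_getD, List.getElem?_eraseIdx_of_lt (Nat.succ_pos i),
    List.getElem?_dropLast, if_pos (by omega : 0 < l.length - 1)]

lemma Qpf_eq_zero_of_card_lt_head (S : Finset ℕ) (fuel : ℕ) (l : List ℕ)
    (heven : Even l.length) (hfuel : l.length ≤ 2 * fuel) (hhead : S.card < l.getD 0 0) :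
    Qpf S fuel l = 0 := by
  have hpos : 0 < l.length :=
    List.length_pos_iff.mpr (by rintro rfl; exact Nat.not_lt_zero _ hhead)
  induction fuel generalizing l with
  | zero => omega
  | succ fuel ih =>
    have hlen : 2 ≤ l.length := by
      obtain ⟨k, hk⟩ := heven
      omega
    rw [Qpf, if_neg (by omega)]
    refine Finset.sum_eq_zero fun j hj => ?_
    rcases j with _ | i
    · rw [Qtp_eq_zero_of_card_lt hhead, mul_zero, zero_mul]
    · have hi : i + 1 < l.length - 1 := Finset.mem_range.mp hj
      have hlen' : (l.dropLast.eraseIdx (i + 1)).length = l.length - 2 := by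
        rw [List.length_eraseIdx_of_lt (by simpa using hi), List.length_dropLast]
        omega
      rw [ih _ (by rw [hlen']; exact (Nat.even_sub hlen).mpr (by simp [heven]))
        (by omega) (by rwa [List.getD_zero_dropLast_eraseIdx_succ hlen]) (by omega), mul_zero]

theorem Qtilde_vanishing_general (n : ℕ) (lam : List ℕ)
    (hbig : n < lam.getD 0 0) :
    Qlam (Finset.range n) lam = 0 := by
  have hne : lam ≠ [] := by
    rintro rfl
    exact absurd hbig (Nat.not_lt_zero _)
  unfold Qlam
  split_ifs with heven
  · exact Qpf_eq_zero_of_card_lt_head _ _ _ heven (by omega) (by simpa using hbig)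
  · refine Qpf_eq_zero_of_card_lt_head _ _ _ ?_
      (by simp only [List.length_append, List.length_singleton]; omega) ?_
    · simpa [Nat.even_add_one] using heven
    · rwa [Finset.card_range, List.getD_append _ _ _ _ (List.length_pos_iff.mpr hne)]

/-- Vanishing: if `λ₁ > n` then `Q̃_λ(x₁,…,x_n) = 0`. -/
theorem Qtilde_vanishing (n : ℕ) (lam : List ℕ)
    (hlam : List.Pairwise (· ≥ ·) lam) (hbig : n < lam.getD 0 0) :
    Qlam (Finset.range n) lam = 0 :=
  Qtilde_vanishing_general n lam hbig
end
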